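/- If a graph G has a perfect matching, then γ'_s(G) ≥ 0. -/

import Mathlib

open scoped Classical

noncomputable def edgeFin {V : Type*} [Fintype V] (G : SimpleGraph V) : Finset (Sym2 V) :=
  Finset.univ.filter (· ∈ G.edgeSet)

noncomputable def closedNbhd {V : Type*} [Fintype V] (G : SimpleGraph V) (e : Sym2 V) :
    Finset (Sym2 V) :=
  (edgeFin G).filter (fun e' => ∃ v, v ∈ e ∧ v ∈ e')

def IsSEDF {V : Type*} [Fintype V] (G : SimpleGraph V) (f : Sym2 V → ℤ) : Prop :=
  (∀ e ∈ edgeFin G, f e = 1 ∨ f e = -1) ∧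
  ∀ e ∈ edgeFin G, 1 ≤ ∑ e' ∈ closedNbhd G e, f e'

noncomputable def vsum {V : Type*} [Fintype V] (G : SimpleGraph V) (f : Sym2 V → ℤ) (v : V) : ℤ :=
  ∑ e ∈ (edgeFin G).filter (fun e => v ∈ e), f e

noncomputable def gammaS {V : Type*} [Fintype V] (G : SimpleGraph V) : ℤ :=
  sInf {z : ℤ | ∃ f, IsSEDF G f ∧ z = ∑ e ∈ edgeFin G, f e}

def IsLGraph {V : Type*} [Fintype V] (m n : ℕ) (G : SimpleGraph V) : Prop :=
  Fintype.card V = (n + 1) * (m * n + m + 1) ∧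
  ∃ P : Fin (n + 1) → Finset V,
    (∀ v : V, ∃! i, v ∈ P i) ∧
    (∀ i, (P i).card = m * n + m + 1) ∧
    (∀ u ∈ P 0, ∀ v ∈ P 0, u ≠ v → G.Adj u v) ∧
    (∀ i, i ≠ 0 → ∀ u ∈ P i, ∀ v ∈ P i, ¬ G.Adj u v) ∧
    (∀ i, i ≠ 0 → ∀ v ∈ P i, ((P 0).filter (G.Adj v)).card = m) ∧
    (∀ i, i ≠ 0 → ∀ v ∈ P 0, ((P i).filter (G.Adj v)).card = m) ∧
    (∀ i j, i ≠ 0 → j ≠ 0 → i ≠ j → ∀ u ∈ P i, ∀ v ∈ P j, ¬ G.Adj u v)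

def MConnected {V : Type*} [Fintype V] (m : ℕ) (G : SimpleGraph V) : Prop :=
  m < Fintype.card V ∧
  ∀ S : Finset V, S.card < m → (G.induce ((↑S : Set V)ᶜ)).Connected

def IsElementary {V : Type*} (H : SimpleGraph V) : Prop :=
  (∀ v, (H.neighborSet v).ncard ≤ 2) ∧
  ∀ v, (H.neighborSet v).ncard = 1 → ∀ w, H.Adj v w → (H.neighborSet w).ncard = 1

/-!
For a vertex v and an SEDF f write f(v) (`vsum G f v`) for the sum of f over the edges at v.
If e = xy is an edge, N[e] is the union of the edges at x and those at y, which meet only in e,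
so f(N[e]) + f(e) = f(x) + f(y); as f(N[e]) ≥ 1 and f(e) ≥ -1, this gives f(x) + f(y) ≥ 0.
A perfect matching is an involution σ of the vertices with v adjacent to σ v; summing
f(v) + f(σ v) ≥ 0 over all v gives 2 Σ_v f(v) ≥ 0, and Σ_v f(v) = 2 f(E) by double counting.
-/

open Finset

lemma SimpleGraph.Subgraph.IsPerfectMatching.exists_perm_adj {V : Type*} {G : SimpleGraph V}
    {M : G.Subgraph} (hM : M.IsPerfectMatching) : ∃ σ : Equiv.Perm V, ∀ v, G.Adj v (σ v) := by
  choose partner hadj huniq using fun v => hM.1 (hM.2 v)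
  have hinv : Function.Involutive partner := fun v => (huniq _ v (hadj v).symm).symm
  exact ⟨hinv.toPerm, fun v => M.adj_sub (hadj v)⟩

section

variable {V : Type*} [Fintype V] {G : SimpleGraph V} {f : Sym2 V → ℤ}

lemma mem_edgeFin {e : Sym2 V} : e ∈ edgeFin G ↔ e ∈ G.edgeSet := by
  simp [edgeFin]

lemma sum_vsum (f : Sym2 V → ℤ) : ∑ v, vsum G f v = 2 * ∑ e ∈ edgeFin G, f e := by
  calc ∑ v, vsum G f v = ∑ e ∈ edgeFin G, ∑ v ∈ e.toFinset, f e :=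
        Finset.sum_comm' fun v e => by simp [Sym2.mem_toFinset, and_comm]
    _ = ∑ e ∈ edgeFin G, 2 * f e := Finset.sum_congr rfl fun e he => by
        rw [sum_const, Sym2.card_toFinset_of_not_isDiag e
          (G.not_isDiag_of_mem_edgeSet (mem_edgeFin.mp he)), nsmul_eq_mul, Nat.cast_two]
    _ = 2 * ∑ e ∈ edgeFin G, f e := (mul_sum ..).symm

lemma sum_closedNbhd_add_self {x y : V} (hxy : G.Adj x y) (f : Sym2 V → ℤ) :
    ∑ e ∈ closedNbhd G s(x, y), f e + f s(x, y) = vsum G f x + vsum G f y := by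
  have hunion : closedNbhd G s(x, y) =
      (edgeFin G).filter (x ∈ ·) ∪ (edgeFin G).filter (y ∈ ·) := by
    ext e
    simp only [closedNbhd, mem_filter, mem_union, Sym2.mem_iff, exists_eq_or_imp, exists_eq_left]
    tauto
  have hinter : (edgeFin G).filter (x ∈ ·) ∩ (edgeFin G).filter (y ∈ ·) = {s(x, y)} := by
    ext e
    simp only [mem_inter, mem_filter, mem_singleton]
    constructor
    · rintro ⟨⟨-, hx⟩, -, hy⟩
      exact (Sym2.mem_and_mem_iff hxy.ne).mp ⟨hx, hy⟩
    · rintro rfl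
      have he : s(x, y) ∈ edgeFin G := mem_edgeFin.mpr hxy
      exact ⟨⟨he, Sym2.mem_mk_left x y⟩, he, Sym2.mem_mk_right x y⟩
  rw [hunion, ← sum_singleton f s(x, y), ← hinter]
  exact sum_union_inter

namespace IsSEDF

lemma vsum_add_vsum_nonneg (hf : IsSEDF G f) {x y : V} (hxy : G.Adj x y) :
    0 ≤ vsum G f x + vsum G f y := by
  have he : s(x, y) ∈ edgeFin G := mem_edgeFin.mpr hxy
  rcases hf.1 _ he with h | h <;> linarith [hf.2 _ he, sum_closedNbhd_add_self hxy f]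

lemma sum_nonneg_of_perm (hf : IsSEDF G f) (σ : Equiv.Perm V) (hσ : ∀ v, G.Adj v (σ v)) :
    0 ≤ ∑ e ∈ edgeFin G, f e := by
  have h : 0 ≤ ∑ v, (vsum G f v + vsum G f (σ v)) :=
    sum_nonneg fun v _ => hf.vsum_add_vsum_nonneg (hσ v)
  rw [sum_add_distrib, Equiv.sum_comp σ (vsum G f), sum_vsum] at h
  linarith

end IsSEDF

lemma isSEDF_one : IsSEDF G 1 := by
  refine ⟨fun _ _ => Or.inl rfl, fun e he => ?_⟩
  have hself : e ∈ closedNbhd G e := by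
    induction e using Sym2.ind with
    | _ a b => exact mem_filter.mpr ⟨he, a, Sym2.mem_mk_left a b, Sym2.mem_mk_left a b⟩
  simpa using card_pos.mpr ⟨e, hself⟩

end

theorem stmt11 {V : Type*} [Fintype V] (G : SimpleGraph V)
    (hpm : ∃ M : G.Subgraph, M.IsPerfectMatching) :
    0 ≤ gammaS G := by
  obtain ⟨M, hM⟩ := hpm
  obtain ⟨σ, hσ⟩ := hM.exists_perm_adj
  refine le_csInf ⟨_, 1, isSEDF_one, rfl⟩ ?_
  rintro z ⟨f, hf, rfl⟩
  exact hf.sum_nonneg_of_perm σ hσ
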